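/- arXiv:1211.0359 — 2 statements merged into one kernel-verified Lean document; each statement's English description precedes it below -/
import Mathlib

section
/- For 0<q<1 and ν>-1 with ν not an integer, the q-Wronskian constant of j_ν and γ_ν equals q^{-2ν}-1; that is, for all x in ℝ_q, x^{2ν}[j_ν(x;q²)γ_ν(qx) - j_ν(qx;q²)γ_ν(x)] = q^{-2ν}-1, where γ_ν(x) = x^{-2ν}j_{-ν}(q^{-ν}x;q²). -/
open scoped BigOperators

noncomputable def qPochR (q a : ℝ) (n : ℕ) : ℝ := ∏ i ∈ Finset.range n, (1 - a * q ^ i)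

/-- Normalized Hahn–Exton q-Bessel function `j_α(x;q²)` (real version). -/
noncomputable def jR (q α x : ℝ) : ℝ :=
  ∑' n : ℕ, (-1) ^ n * q ^ (n * (n + 1)) * x ^ (2 * n) /
    (qPochR (q ^ 2) (q ^ 2) n * qPochR (q ^ 2) (q ^ (2 * α + 2)) n)

/-- `γ_ν(x) = x^{-2ν} j_{-ν}(q^{-ν} x; q²)`. -/
noncomputable def gammaR (q ν x : ℝ) : ℝ := x ^ (-(2 * ν)) * jR q (-ν) (q ^ (-ν) * x)

/-!
The coefficients of `j_α(x; q²) = ∑ aₘ x^{2m}` satisfy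
`aₘ₊₁ (1 - q^{2m+2}) (1 - q^{2α+2m+2}) = -q^{2m+2} aₘ`. By the ratio test the series converges
everywhere, and the recurrence is exactly the `q`-difference equation
`f x + (q²x² - 1 - t) f (q x) + t f (q² x) = 0` for `f = j_ν`, `t = q^{2ν}`. Rescaling the same
equation for `j_{-ν}` shows that `g x = j_{-ν}(q^{-ν} x)` solves the adjoint equation
`t g x + (q²x² - 1 - t) g (q x) + g (q² x) = 0`. Hence the `q`-Wronskian
`f x g (q x) - t f (q x) g x` is invariant under `x ↦ q x`; since it is continuous at `0`, it equals
its value `1 - t` there. As `γ_ν(x) = x^{-2ν} g x`, the claim holds for every `x > 0`.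
-/

open Filter Topology

lemma qPochR_succ (q a : ℝ) (n : ℕ) : qPochR q a (n + 1) = qPochR q a n * (1 - a * q ^ n) :=
  Finset.prod_range_succ _ _

lemma qPochR_ne_zero {q a : ℝ} (h : ∀ i : ℕ, a * q ^ i ≠ 1) (n : ℕ) : qPochR q a n ≠ 0 :=
  Finset.prod_ne_zero_iff.2 fun i _ => sub_ne_zero.2 (h i).symm

section

variable {q α : ℝ}

lemma sq_mul_sq_pow_ne_one (hq0 : 0 < q) (hq1 : q < 1) (i : ℕ) : q ^ 2 * (q ^ 2) ^ i ≠ 1 := by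
  rw [← pow_succ']
  exact (pow_lt_one₀ (by positivity) (by nlinarith) (Nat.succ_ne_zero i)).ne

lemma rpow_mul_sq_pow_ne_one (hq0 : 0 < q) (hq1 : q < 1) (hα : ∀ n : ℕ, α ≠ -(n + 1))
    (i : ℕ) : q ^ (2 * α + 2) * (q ^ 2) ^ i ≠ 1 := by
  rw [← pow_mul, ← Real.rpow_natCast, ← Real.rpow_add hq0, ← Real.rpow_zero q,
    Ne, Real.rpow_right_inj hq0 hq1.ne]
  intro h
  exact hα i (by push_cast at h; linarith)

noncomputable def jCoeff (q α : ℝ) (m : ℕ) : ℝ :=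
  (-1) ^ m * q ^ (m * (m + 1)) / (qPochR (q ^ 2) (q ^ 2) m * qPochR (q ^ 2) (q ^ (2 * α + 2)) m)

lemma jR_eq_tsum (q α x : ℝ) : jR q α x = ∑' m : ℕ, jCoeff q α m * x ^ (2 * m) :=
  tsum_congr fun _ => mul_div_right_comm _ _ _

lemma jCoeff_succ_denom_ne_zero (hq0 : 0 < q) (hq1 : q < 1) (hα : ∀ n : ℕ, α ≠ -(n + 1))
    (m : ℕ) : (1 - (q ^ 2) ^ (m + 1)) * (1 - q ^ (2 * α + 2) * (q ^ 2) ^ m) ≠ 0 :=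
  mul_ne_zero (sub_ne_zero.2 (pow_succ' (q ^ 2) m ▸ sq_mul_sq_pow_ne_one hq0 hq1 m).symm)
    (sub_ne_zero.2 (rpow_mul_sq_pow_ne_one hq0 hq1 hα m).symm)

lemma jCoeff_succ (hq0 : 0 < q) (hq1 : q < 1) (hα : ∀ n : ℕ, α ≠ -(n + 1)) (m : ℕ) :
    jCoeff q α (m + 1) =
      -((q ^ 2) ^ (m + 1) / ((1 - (q ^ 2) ^ (m + 1)) * (1 - q ^ (2 * α + 2) * (q ^ 2) ^ m))) *
        jCoeff q α m := by
  have h₁ := qPochR_ne_zero (sq_mul_sq_pow_ne_one hq0 hq1) m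
  have h₂ := qPochR_ne_zero (rpow_mul_sq_pow_ne_one hq0 hq1 hα) m
  obtain ⟨h₃, h₄⟩ := mul_ne_zero_iff.1 (jCoeff_succ_denom_ne_zero hq0 hq1 hα m)
  simp only [jCoeff, qPochR_succ, ← pow_succ']
  field_simp
  ring

lemma tendsto_jCoeff_ratio (hq0 : 0 < q) (hq1 : q < 1) :
    Tendsto (fun m : ℕ => (q ^ 2) ^ (m + 1) /
      ((1 - (q ^ 2) ^ (m + 1)) * (1 - q ^ (2 * α + 2) * (q ^ 2) ^ m))) atTop (𝓝 0) := by
  have hp : Tendsto (fun m : ℕ => (q ^ 2) ^ m) atTop (𝓝 0) :=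
    tendsto_pow_atTop_nhds_zero_of_lt_one (by positivity) (by nlinarith)
  have hp' := (tendsto_add_atTop_iff_nat 1).2 hp
  rw [show (0 : ℝ) = 0 / ((1 - 0) * (1 - q ^ (2 * α + 2) * 0)) by simp]
  exact hp'.div ((hp'.const_sub 1).mul ((hp.const_mul _).const_sub 1)) (by simp)

lemma summable_jCoeff_mul_pow (hq0 : 0 < q) (hq1 : q < 1) (hα : ∀ n : ℕ, α ≠ -(n + 1))
    (x : ℝ) : Summable fun m => jCoeff q α m * x ^ (2 * m) := by
  refine summable_of_ratio_norm_eventually_le (r := 1 / 2) (by norm_num) ?_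
  have hsmall := ((tendsto_jCoeff_ratio (α := α) hq0 hq1).mul_const (x ^ 2)).norm
  rw [zero_mul, norm_zero] at hsmall
  filter_upwards [hsmall.eventually (eventually_le_nhds (by norm_num : (0 : ℝ) < 1 / 2))]
    with m hm
  have hstep : jCoeff q α (m + 1) * x ^ (2 * (m + 1)) =
      -((q ^ 2) ^ (m + 1) / ((1 - (q ^ 2) ^ (m + 1)) * (1 - q ^ (2 * α + 2) * (q ^ 2) ^ m)) *
        x ^ 2) * (jCoeff q α m * x ^ (2 * m)) := by
    rw [jCoeff_succ hq0 hq1 hα]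
    ring
  rw [hstep, norm_mul, norm_neg]
  exact mul_le_mul_of_nonneg_right hm (norm_nonneg _)

lemma hasSum_jR (hq0 : 0 < q) (hq1 : q < 1) (hα : ∀ n : ℕ, α ≠ -(n + 1)) (x : ℝ) :
    HasSum (fun m => jCoeff q α m * x ^ (2 * m)) (jR q α x) := by
  rw [jR_eq_tsum]
  exact (summable_jCoeff_mul_pow hq0 hq1 hα x).hasSum

lemma jR_zero (q α : ℝ) : jR q α 0 = 1 := by
  rw [jR_eq_tsum, tsum_eq_single 0 fun m hm => by simp [hm]]
  simp [jCoeff, qPochR]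

lemma continuousAt_jR_zero (hq0 : 0 < q) (hq1 : q < 1) (hα : ∀ n : ℕ, α ≠ -(n + 1)) :
    ContinuousAt (jR q α) 0 := by
  have hcont : ContinuousOn (fun x => ∑' m : ℕ, jCoeff q α m * x ^ (2 * m)) (Set.Icc (-1) 1) := by
    refine continuousOn_tsum (fun m => by fun_prop)
      (summable_jCoeff_mul_pow hq0 hq1 hα 1).norm fun m x hx => ?_
    rw [one_pow, mul_one, norm_mul, norm_pow]
    exact mul_le_of_le_one_right (norm_nonneg _) (pow_le_one₀ (norm_nonneg _) (abs_le.2 hx))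
  rw [funext (jR_eq_tsum q α)]
  exact hcont.continuousAt (Icc_mem_nhds (by norm_num) (by norm_num))

theorem jR_qDifference (hq0 : 0 < q) (hq1 : q < 1) (hα : ∀ n : ℕ, α ≠ -(n + 1)) (x : ℝ) :
    jR q α x + (q ^ 2 * x ^ 2 - 1 - q ^ (2 * α)) * jR q α (q * x) +
      q ^ (2 * α) * jR q α (q ^ 2 * x) = 0 := by
  set t := q ^ (2 * α)
  have ht : q ^ (2 * α + 2) = t * q ^ 2 := by
    rw [Real.rpow_add hq0, Real.rpow_two]
  let F : ℕ → ℝ := fun m => jCoeff q α m * x ^ (2 * m) * ((1 - (q ^ 2) ^ m) * (1 - t * (q ^ 2) ^ m))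
  have hF : HasSum F (jR q α x - (1 + t) * jR q α (q * x) + t * jR q α (q ^ 2 * x)) := by
    refine (((hasSum_jR hq0 hq1 hα x).sub ((hasSum_jR hq0 hq1 hα (q * x)).mul_left (1 + t))).add
      ((hasSum_jR hq0 hq1 hα (q ^ 2 * x)).mul_left t)).congr_fun fun m => ?_
    ring
  have hF_succ : HasSum (fun m => F (m + 1)) (-(q ^ 2 * x ^ 2) * jR q α (q * x)) := by
    refine ((hasSum_jR hq0 hq1 hα (q * x)).mul_left (-(q ^ 2 * x ^ 2))).congr_fun fun m => ?_
    have hD := jCoeff_succ_denom_ne_zero hq0 hq1 hα m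
    simp only [F]
    rw [show t * (q ^ 2) ^ (m + 1) = q ^ (2 * α + 2) * (q ^ 2) ^ m by rw [ht]; ring,
      jCoeff_succ hq0 hq1 hα]
    generalize (1 - (q ^ 2) ^ (m + 1)) * (1 - q ^ (2 * α + 2) * (q ^ 2) ^ m) = D at hD ⊢
    field_simp
    ring
  have h := ((hasSum_nat_add_iff 1).1 hF_succ).unique hF
  rw [Finset.sum_range_one, show F 0 = 0 by simp [F], add_zero] at h
  linear_combination -h

end

theorem eq_of_map_mul_eq_of_continuousAt {𝕜 X : Type*} [NormedField 𝕜] [TopologicalSpace X]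
    [T2Space X] {q : 𝕜} (hq : ‖q‖ < 1) {W : 𝕜 → X} (hW : ∀ x, W (q * x) = W x)
    (hW0 : ContinuousAt W 0) (x : 𝕜) : W x = W 0 := by
  have hiter : ∀ k : ℕ, W (q ^ k * x) = W x := by
    intro k
    induction k with
    | zero => rw [pow_zero, one_mul]
    | succ k ih => rw [pow_succ', mul_assoc, hW, ih]
  have hlim : Tendsto (fun k : ℕ => q ^ k * x) atTop (𝓝 0) := by
    simpa using (tendsto_pow_atTop_nhds_zero_of_norm_lt_one hq).mul_const x
  exact tendsto_nhds_unique tendsto_const_nhds ((hW0.tendsto.comp hlim).congr hiter)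

theorem qWronskian_map_mul {f g c : ℝ → ℝ} {q t : ℝ}
    (hf : ∀ x, f x + c x * f (q * x) + t * f (q ^ 2 * x) = 0)
    (hg : ∀ x, t * g x + c x * g (q * x) + g (q ^ 2 * x) = 0) (x : ℝ) :
    f (q * x) * g (q * (q * x)) - t * f (q * (q * x)) * g (q * x) =
      f x * g (q * x) - t * f (q * x) * g x := by
  rw [← mul_assoc, ← sq]
  linear_combination f (q * x) * hg x - g (q * x) * hf x

theorem qWronskian_eq_of_continuousAt {f g c : ℝ → ℝ} {q t : ℝ} (hq : |q| < 1)
    (hf : ∀ x, f x + c x * f (q * x) + t * f (q ^ 2 * x) = 0)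
    (hg : ∀ x, t * g x + c x * g (q * x) + g (q ^ 2 * x) = 0)
    (hf0 : ContinuousAt f 0) (hg0 : ContinuousAt g 0) (x : ℝ) :
    f x * g (q * x) - t * f (q * x) * g x = (1 - t) * f 0 * g 0 := by
  have hmul : ContinuousAt (fun x => q * x) 0 := (continuous_const_mul q).continuousAt
  have hfq : ContinuousAt (fun x => f (q * x)) 0 :=
    ContinuousAt.comp (by rwa [mul_zero]) hmul
  have hgq : ContinuousAt (fun x => g (q * x)) 0 :=
    ContinuousAt.comp (by rwa [mul_zero]) hmul
  rw [eq_of_map_mul_eq_of_continuousAt (W := fun x => f x * g (q * x) - t * f (q * x) * g x) hq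
    (qWronskian_map_mul hf hg) ((hf0.mul hgq).sub ((continuousAt_const.mul hfq).mul hg0)) x]
  simp only [mul_zero]
  ring

section

variable {q ν : ℝ}

lemma jR_neg_rescaled_qDifference (hq0 : 0 < q) (hq1 : q < 1) (hν : ∀ n : ℕ, -ν ≠ -(n + 1))
    (x : ℝ) :
    q ^ (2 * ν) * jR q (-ν) (q ^ (-ν) * x) +
        (q ^ 2 * x ^ 2 - 1 - q ^ (2 * ν)) * jR q (-ν) (q ^ (-ν) * (q * x)) +
      jR q (-ν) (q ^ (-ν) * (q ^ 2 * x)) = 0 := by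
  have h := jR_qDifference hq0 hq1 hν (q ^ (-ν) * x)
  rw [mul_left_comm q, mul_left_comm (q ^ 2)] at h
  have hinv : q ^ (2 * ν) * q ^ (2 * -ν) = 1 := by
    rw [← Real.rpow_add hq0]
    simp
  have hsq : q ^ (2 * ν) * (q ^ (-ν)) ^ 2 = 1 := by
    rw [← Real.rpow_natCast, ← Real.rpow_mul hq0.le, ← Real.rpow_add hq0]
    ring_nf
    exact Real.rpow_zero q
  linear_combination q ^ (2 * ν) * h - q ^ 2 * x ^ 2 * jR q (-ν) (q ^ (-ν) * (q * x)) * hsq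
    + (jR q (-ν) (q ^ (-ν) * (q * x)) - jR q (-ν) (q ^ (-ν) * (q ^ 2 * x))) * hinv

theorem jR_gammaR_qWronskian_eq (hq0 : 0 < q) (hq1 : q < 1)
    (hν : ∀ n : ℕ, ν ≠ -(n + 1)) (hν' : ∀ n : ℕ, -ν ≠ -(n + 1)) {x : ℝ} (hx : 0 < x) :
    x ^ (2 * ν) * (jR q ν x * gammaR q ν (q * x) - jR q ν (q * x) * gammaR q ν x) =
      q ^ (-(2 * ν)) - 1 := by
  have hg0 : ContinuousAt (fun x => jR q (-ν) (q ^ (-ν) * x)) 0 :=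
    ContinuousAt.comp (g := jR q (-ν)) (by rw [mul_zero]; exact continuousAt_jR_zero hq0 hq1 hν')
      (continuous_const_mul _).continuousAt
  have hW := qWronskian_eq_of_continuousAt (abs_lt.2 ⟨by linarith, hq1⟩)
    (jR_qDifference hq0 hq1 hν) (jR_neg_rescaled_qDifference hq0 hq1 hν')
    (continuousAt_jR_zero hq0 hq1 hν) hg0 x
  simp only [mul_zero, jR_zero, mul_one] at hW
  have hx_inv : x ^ (2 * ν) * x ^ (-(2 * ν)) = 1 := by
    rw [← Real.rpow_add hx]
    simp
  have hq_inv : q ^ (2 * ν) * q ^ (-(2 * ν)) = 1 := by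
    rw [← Real.rpow_add hq0]
    simp
  simp only [gammaR, Real.mul_rpow hq0.le hx.le]
  linear_combination
    (q ^ (-(2 * ν)) * jR q ν x * jR q (-ν) (q ^ (-ν) * (q * x))
      - jR q ν (q * x) * jR q (-ν) (q ^ (-ν) * x)) * hx_inv
    + q ^ (-(2 * ν)) * hW + (jR q ν (q * x) * jR q (-ν) (q ^ (-ν) * x) - 1) * hq_inv

end

theorem stmt3_general (q ν : ℝ) (hq0 : 0 < q) (hq1 : q < 1)
    (hνnotint : ∀ k : ℤ, ν ≠ (k : ℝ)) :
    ∀ n : ℤ,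
      ((q : ℝ) ^ n) ^ (2 * ν) *
        (jR q ν (q ^ n) * gammaR q ν (q * q ^ n) - jR q ν (q * q ^ n) * gammaR q ν (q ^ n)) =
      q ^ (-(2 * ν)) - 1 := fun n =>
  jR_gammaR_qWronskian_eq hq0 hq1
    (fun k h => hνnotint (-(k + 1)) (by push_cast; exact h))
    (fun k h => hνnotint (k + 1) (by push_cast; linarith)) (zpow_pos hq0 n)

theorem stmt3 (q ν : ℝ) (hq0 : 0 < q) (hq1 : q < 1) (hν : -1 < ν)
    (hνnotint : ∀ k : ℤ, ν ≠ (k : ℝ)) :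
    ∀ n : ℤ,
      ((q : ℝ) ^ n) ^ (2 * ν) *
        (jR q ν (q ^ n) * gammaR q ν (q * q ^ n) - jR q ν (q * q ^ n) * gammaR q ν (q ^ n)) =
      q ^ (-(2 * ν)) - 1 :=
  stmt3_general q ν hq0 hq1 hνnotint
end

section
/- Let (ν_n) be a sequence of reals with |ν_n| ≤ 1 for all large n, satisfying ν_{n+1} = A_n - 1/ν_n where A_n → +∞. Then for n large enough ν_n > 0, and ν_n → 0 as n → ∞. -/
open Filter Topology

theorem stmt16 (A : ℕ → ℝ) (v : ℕ → ℝ)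
    (hA : Tendsto A atTop atTop)
    (hne : ∀ n, v n ≠ 0)
    (hrec : ∀ n, v (n + 1) = A n - 1 / v n)
    (hb : ∀ᶠ n in atTop, |v n| ≤ 1) :
    (∀ᶠ n in atTop, 0 < v n) ∧ Tendsto v atTop (𝓝 0) := by
  obtain ⟨N1, hN1⟩ := eventually_atTop.1 hb
  obtain ⟨N2, hN2⟩ := eventually_atTop.1 (hA.eventually_ge_atTop 2)
  set N := max N1 N2 with hN
  have key : ∀ n ≥ N, 0 < v n ∧ v n ≤ 1 / (A n - 1) := by
    intro n hn
    have h1 : |v n| ≤ 1 := hN1 n (le_trans (le_max_left _ _) hn)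
    have h2 : |v (n+1)| ≤ 1 :=
      hN1 (n+1) (le_trans (le_trans (le_max_left _ _) hn) (Nat.le_succ n))
    have h3 : (2:ℝ) ≤ A n := hN2 n (le_trans (le_max_right _ _) hn)
    have hcancel : v n * (1 / v n) = 1 := mul_one_div_cancel (hne n)
    have hpos : 0 < v n := by
      by_contra h
      push_neg at h
      have hneg : v n < 0 := lt_of_le_of_ne h (hne n)
      have hge : -1 ≤ v n := (abs_le.1 h1).1
      have hinv : 1 / v n ≤ -1 := by nlinarith
      have h4 : 3 ≤ v (n+1) := by rw [hrec n]; linarith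
      have h5 := (abs_le.1 h2).2
      linarith
    refine ⟨hpos, ?_⟩
    have hle1 : v n ≤ 1 := (abs_le.1 h1).2
    have hA1 : A n - 1 ≤ 1 / v n := by
      have hv1 : v (n+1) ≤ 1 := (abs_le.1 h2).2
      have := hrec n; linarith
    rw [le_div_iff₀ (by linarith : (0:ℝ) < A n - 1)]
    nlinarith
  constructor
  · exact eventually_atTop.2 ⟨N, fun n hn => (key n hn).1⟩
  · have hg : Tendsto (fun n => 1 / (A n - 1)) atTop (𝓝 0) := by
      simp only [one_div]
      exact (tendsto_atTop_add_const_right _ (-1) hA).inv_tendsto_atTop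
    refine squeeze_zero' ?_ ?_ hg
    · exact eventually_atTop.2 ⟨N, fun n hn => (key n hn).1.le⟩
    · exact eventually_atTop.2 ⟨N, fun n hn => (key n hn).2⟩
end
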